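/- Let G be a finite simple graph and let B be a set of triangles of G that is linearly independent in the cycle space of G (no nonempty subset of B sums to the empty cycle). Then there exists a minimum cycle basis of G containing B. -/

import Mathlib

/-!
Among the minimum cycle bases choose one, `M`, sharing as many cycles as possible with `B`.
If a triangle `t ∈ B` were missing from `M`, write `t` as a sum of cycles of `M`; since `B` is
independent, one summand `c` lies outside `B`. Exchanging `c` for `t` gives again a cycle basis,
no heavier because every nonempty cycle has at least three edges, hence a minimum one sharing
more cycles with `B`.
-/

namespace MCBI

variable {V : Type*} [Fintype V] [DecidableEq V]

/-- A *cycle* of a simple graph `G`: a set of edges of `G` such that every vertex of `G`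
is incident to an even number of them. -/
def IsCycle (G : SimpleGraph V) (c : Finset (Sym2 V)) : Prop :=
  (↑c : Set (Sym2 V)) ⊆ G.edgeSet ∧ ∀ v : V, Even (c.filter (fun e => v ∈ e)).card

/-- The `⊕`-sum (GF(2)-sum, i.e. iterated symmetric difference) of a finite set of cycles:
an edge lies in the sum iff it lies in an odd number of the cycles. -/
def cycleSum (D : Finset (Finset (Sym2 V))) : Finset (Sym2 V) :=
  Finset.univ.filter fun e => Odd (D.filter (fun c => e ∈ c)).card

/-- Linear independence over `ℤ/2ℤ`: no nonempty subset sums to the empty cycle. -/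
def LinIndep (B : Finset (Finset (Sym2 V))) : Prop :=
  ∀ D ⊆ B, D.Nonempty → cycleSum D ≠ ∅

/-- `B` spans every cycle of `G`. -/
def SpansCycles (G : SimpleGraph V) (B : Finset (Finset (Sym2 V))) : Prop :=
  ∀ c : Finset (Sym2 V), IsCycle G c → ∃ D ⊆ B, cycleSum D = c

/-- A *cycle basis* of `G`: a linearly independent set of cycles spanning every cycle of `G`. -/
def IsCycleBasis (G : SimpleGraph V) (B : Finset (Finset (Sym2 V))) : Prop :=
  (∀ c ∈ B, IsCycle G c) ∧ LinIndep B ∧ SpansCycles G B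

/-- `λ_B(c, d) = 1`: the cycle `c` belongs to a subset of `B` summing to `d`
(the unique such subset when `B` is a basis). -/
def lambdaEq1 (B : Finset (Finset (Sym2 V))) (c d : Finset (Sym2 V)) : Prop :=
  ∃ D ⊆ B, cycleSum D = d ∧ c ∈ D

/-- Total weight of a set of cycles: the sum of the numbers of edges of its cycles. -/
def weight (B : Finset (Finset (Sym2 V))) : ℕ := ∑ c ∈ B, c.card

/-- A *minimum cycle basis*: a cycle basis of minimum total weight. -/
def IsMCB (G : SimpleGraph V) (B : Finset (Finset (Sym2 V))) : Prop :=
  IsCycleBasis G B ∧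
    ∀ B' : Finset (Finset (Sym2 V)), IsCycleBasis G B' → weight B ≤ weight B'

/-- Membership in the `ℤ/2ℤ`-linear span of a set `S` of cycles. -/
def InSpan (S : Set (Finset (Sym2 V))) (c : Finset (Sym2 V)) : Prop :=
  ∃ D : Finset (Finset (Sym2 V)), (↑D : Set (Finset (Sym2 V))) ⊆ S ∧ cycleSum D = c

/-- The vertices incident to the edges of a cycle. -/
def cycVerts (c : Finset (Sym2 V)) : Finset V :=
  Finset.univ.filter fun v => ∃ e ∈ c, v ∈ e

/-- A finite set of edges forms a connected subgraph: the graph consisting of these edges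
together with their endpoints is connected. -/
def EdgesConnected (E : Finset (Sym2 V)) : Prop :=
  ((SimpleGraph.fromEdgeSet (↑E : Set (Sym2 V))).induce {v : V | ∃ e ∈ E, v ∈ e}).Connected

/-- An *elementary cycle*: a nonempty cycle whose edges form a connected subgraph in which
every incident vertex has degree exactly `2`. -/
def IsElementaryCycle (G : SimpleGraph V) (c : Finset (Sym2 V)) : Prop :=
  IsCycle G c ∧ c.Nonempty ∧
    (∀ v : V, (∃ e ∈ c, v ∈ e) → (c.filter (fun e => v ∈ e)).card = 2) ∧
    EdgesConnected c

/-- The family of independent sets of the matroid `𝓜(G)`: the sets of cycles contained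
in some minimum cycle basis of `G`. -/
def matroidIndep (G : SimpleGraph V) : Set (Finset (Finset (Sym2 V))) :=
  {D | ∃ B, IsMCB G B ∧ D ⊆ B}

/-- A set `B` of cycles of the intersection graph `G` is *feasible* for the instance
`G₁, …, G_k` if for every `i` there is a minimum cycle basis of `Gᵢ` containing `B`. -/
def Feasible {k : ℕ} (Gs : Fin k → SimpleGraph V) (G : SimpleGraph V)
    (B : Finset (Finset (Sym2 V))) : Prop :=
  (∀ c ∈ B, IsCycle G c) ∧ ∀ i : Fin k, ∃ Bi, IsMCB (Gs i) Bi ∧ B ⊆ Bi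

open Finset
open scoped symmDiff

theorem _root_.Finset.odd_card_symmDiff {α : Type*} [DecidableEq α] (s t : Finset α) :
    Odd #(s ∆ t) ↔ (Odd #s ↔ Even #t) := by
  have key : #(s ∆ t) + 2 * #(s ∩ t) = #s + #t := by
    have hs := card_sdiff_add_card_inter s t
    have ht := card_sdiff_add_card_inter t s
    rw [inter_comm] at ht
    rw [Finset.symmDiff_def, card_union_of_disjoint disjoint_sdiff_sdiff]
    omega
  rw [← Nat.odd_add, ← key, Nat.odd_add]
  simp

theorem _root_.Finset.filter_symmDiff {α : Type*} [DecidableEq α] (p : α → Prop) [DecidablePred p]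
    (s t : Finset α) : (s ∆ t).filter p = s.filter p ∆ t.filter p := by
  ext x
  simp only [mem_filter, mem_symmDiff]
  tauto

theorem mem_cycleSum {D : Finset (Finset (Sym2 V))} {e : Sym2 V} :
    e ∈ cycleSum D ↔ Odd #(D.filter (e ∈ ·)) := by
  simp [cycleSum]

theorem cycleSum_symmDiff (D₁ D₂ : Finset (Finset (Sym2 V))) :
    cycleSum (D₁ ∆ D₂) = cycleSum D₁ ∆ cycleSum D₂ := by
  ext e
  rw [mem_symmDiff, mem_cycleSum, mem_cycleSum, mem_cycleSum, filter_symmDiff,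
    odd_card_symmDiff, ← Nat.not_odd_iff_even]
  tauto

@[simp]
theorem cycleSum_empty : cycleSum (∅ : Finset (Finset (Sym2 V))) = ∅ := by
  ext
  simp [cycleSum]

@[simp]
theorem cycleSum_singleton (c : Finset (Sym2 V)) : cycleSum {c} = c := by
  ext e
  by_cases he : e ∈ c <;> simp [cycleSum, filter_singleton, he]

theorem cycleSum_insert {D : Finset (Finset (Sym2 V))} {c : Finset (Sym2 V)} (hc : c ∉ D) :
    cycleSum (insert c D) = c ∆ cycleSum D := by
  rw [insert_eq, ← symmDiff_eq_union (disjoint_singleton_left.2 hc), cycleSum_symmDiff,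
    cycleSum_singleton]

section LinIndep

variable {M D₁ D₂ : Finset (Finset (Sym2 V))} {c : Finset (Sym2 V)}

theorem LinIndep.mono {N : Finset (Finset (Sym2 V))} (hM : LinIndep M) (hN : N ⊆ M) :
    LinIndep N :=
  fun D hD => hM D (hD.trans hN)

theorem LinIndep.nonempty_of_mem (hM : LinIndep M) (hc : c ∈ M) : c.Nonempty := by
  rw [nonempty_iff_ne_empty]
  rintro rfl
  exact hM {∅} (singleton_subset_iff.2 hc) (singleton_nonempty _) (cycleSum_singleton ∅)

theorem LinIndep.eq_of_cycleSum_eq (hM : LinIndep M) (h₁ : D₁ ⊆ M) (h₂ : D₂ ⊆ M)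
    (h : cycleSum D₁ = cycleSum D₂) : D₁ = D₂ := by
  by_contra hne
  exact hM (D₁ ∆ D₂) (symmDiff_subset_union.trans (union_subset h₁ h₂))
    (symmDiff_nonempty.2 hne) (by rw [cycleSum_symmDiff, symmDiff_eq_empty.2 h])

theorem LinIndep.insert (hM : LinIndep M) (hc : ¬InSpan ↑M c) : LinIndep (insert c M) := by
  intro D hD hne hzero
  by_cases hcD : c ∈ D
  · refine hc ⟨D.erase c, coe_subset.2 (subset_insert_iff.1 hD), ?_⟩
    rw [← insert_erase hcD, cycleSum_insert (notMem_erase c D)] at hzero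
    exact (symmDiff_eq_empty.1 hzero).symm
  · exact hM D ((subset_insert_iff_of_notMem hcD).1 hD) hne hzero

end LinIndep

section InSpan

variable {S : Set (Finset (Sym2 V))}

theorem inSpan_of_mem {c : Finset (Sym2 V)} (hc : c ∈ S) : InSpan S c :=
  ⟨{c}, by simpa using hc, cycleSum_singleton c⟩

theorem InSpan.symmDiff {x y : Finset (Sym2 V)} (hx : InSpan S x) (hy : InSpan S y) :
    InSpan S (x ∆ y) := by
  obtain ⟨D₁, hD₁, rfl⟩ := hx
  obtain ⟨D₂, hD₂, rfl⟩ := hy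
  refine ⟨D₁ ∆ D₂, ?_, cycleSum_symmDiff D₁ D₂⟩
  rw [coe_symmDiff]
  exact Set.symmDiff_subset_union.trans (Set.union_subset hD₁ hD₂)

theorem InSpan.cycleSum {D : Finset (Finset (Sym2 V))} (h : ∀ c ∈ D, InSpan S c) :
    InSpan S (cycleSum D) := by
  induction D using Finset.induction_on with
  | empty => exact ⟨∅, by simp⟩
  | insert c D hc ih =>
    rw [cycleSum_insert hc]
    exact (h c (mem_insert_self c D)).symmDiff (ih fun x hx => h x (mem_insert_of_mem hx))

theorem SpansCycles.of_forall_inSpan {G : SimpleGraph V} {M N : Finset (Finset (Sym2 V))}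
    (hM : SpansCycles G M) (h : ∀ c ∈ M, InSpan ↑N c) : SpansCycles G N := by
  intro x hx
  obtain ⟨D, hDM, rfl⟩ := hM x hx
  obtain ⟨E, hEN, hE⟩ := InSpan.cycleSum fun c hc => h c (hDM hc)
  exact ⟨E, coe_subset.1 hEN, hE⟩

end InSpan

omit [Fintype V] in
theorem IsCycle.exists_ne_mem {G : SimpleGraph V} {c : Finset (Sym2 V)} {e : Sym2 V} {v : V}
    (hc : IsCycle G c) (he : e ∈ c) (hv : v ∈ e) : ∃ e' ∈ c, e' ≠ e ∧ v ∈ e' := by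
  have hpos : 0 < #(c.filter (v ∈ ·)) := card_pos.2 ⟨e, mem_filter.2 ⟨he, hv⟩⟩
  have htwo : 1 < #(c.filter (v ∈ ·)) := by
    obtain ⟨k, hk⟩ := hc.2 v
    omega
  obtain ⟨e', he', hne⟩ := exists_mem_ne htwo e
  exact ⟨e', (mem_filter.1 he').1, hne, (mem_filter.1 he').2⟩

omit [Fintype V] in
theorem IsCycle.three_le_card {G : SimpleGraph V} {c : Finset (Sym2 V)} (hc : IsCycle G c)
    (hne : c.Nonempty) : 3 ≤ #c := by
  obtain ⟨⟨u, v⟩, he⟩ := hne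
  have huv : u ≠ v := (hc.1 he).ne
  obtain ⟨eu, heu, heu_ne, hu⟩ := hc.exists_ne_mem he (Sym2.mem_mk_left u v)
  obtain ⟨ev, hev, hev_ne, hv⟩ := hc.exists_ne_mem he (Sym2.mem_mk_right u v)
  have hne : eu ≠ ev := by
    rintro rfl
    exact heu_ne ((Sym2.mem_and_mem_iff huv).1 ⟨hu, hv⟩)
  exact two_lt_card_iff.2 ⟨_, _, _, he, heu, hev, heu_ne.symm, hev_ne.symm, hne⟩

omit [Fintype V] in
theorem weight_insert_erase_le {M : Finset (Finset (Sym2 V))} {c t : Finset (Sym2 V)}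
    (hc : c ∈ M) (ht : #t ≤ #c) : weight (insert t (M.erase c)) ≤ weight M := by
  have hsplit : weight (M.erase c) + #c = weight M := sum_erase_add M card hc
  by_cases htM : t ∈ M.erase c
  · rw [insert_eq_of_mem htM]
    omega
  · rw [weight, sum_insert htM, ← weight]
    omega

section Exchange

variable {G : SimpleGraph V} {M D : Finset (Finset (Sym2 V))} {c : Finset (Sym2 V)}

theorem IsCycleBasis.exchange (hM : IsCycleBasis G M) (hDM : D ⊆ M) (hcD : c ∈ D)
    (hcyc : IsCycle G (cycleSum D)) : IsCycleBasis G (insert (cycleSum D) (M.erase c)) := by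
  obtain ⟨hMcyc, hMind, hMspan⟩ := hM
  refine ⟨?_, ?_, ?_⟩
  · intro x hx
    rcases mem_insert.1 hx with rfl | hx
    exacts [hcyc, hMcyc x (mem_of_mem_erase hx)]
  · refine (hMind.mono (erase_subset c M)).insert ?_
    rintro ⟨E, hE, hED⟩
    have hEM : E ⊆ M.erase c := coe_subset.1 hE
    have := hMind.eq_of_cycleSum_eq (hEM.trans (erase_subset c M)) hDM hED
    exact notMem_erase c M (hEM (this ▸ hcD))
  · refine hMspan.of_forall_inSpan fun x hxM => ?_
    by_cases hxc : x = c
    · have hc : cycleSum D ∆ cycleSum (D.erase c) = c := by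
        rw [← insert_erase hcD, cycleSum_insert (notMem_erase c D), erase_insert_eq_erase,
          erase_idem, symmDiff_symmDiff_cancel_right]
      have hspan : InSpan ↑(insert (cycleSum D) (M.erase c)) (cycleSum D ∆ cycleSum (D.erase c)) :=
        (inSpan_of_mem (mem_insert_self _ _)).symmDiff <| InSpan.cycleSum fun y hy =>
          inSpan_of_mem <| mem_insert_of_mem <|
            mem_erase.2 ⟨ne_of_mem_erase hy, hDM (mem_of_mem_erase hy)⟩
      rw [hc] at hspan
      rwa [hxc]
    · exact inSpan_of_mem (mem_insert_of_mem (mem_erase.2 ⟨hxc, hxM⟩))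

theorem IsMCB.exchange (hM : IsMCB G M) (hDM : D ⊆ M) (hcD : c ∈ D)
    (hcyc : IsCycle G (cycleSum D)) (hle : #(cycleSum D) ≤ #c) :
    IsMCB G (insert (cycleSum D) (M.erase c)) :=
  ⟨hM.1.exchange hDM hcD hcyc,
    fun B' hB' => (weight_insert_erase_le (hDM hcD) hle).trans (hM.2 B' hB')⟩

end Exchange

theorem exists_isCycleBasis (G : SimpleGraph V) : ∃ M, IsCycleBasis G M := by
  classical
  have hempty : LinIndep (∅ : Finset (Finset (Sym2 V))) :=
    fun D hD hne => absurd (subset_empty.1 hD) hne.ne_empty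
  obtain ⟨M, hM, hmax⟩ :=
    (univ.filter fun M => (∀ c ∈ M, IsCycle G c) ∧ LinIndep M).exists_max_image card
      ⟨∅, mem_filter.2 ⟨mem_univ _, by simp, hempty⟩⟩
  obtain ⟨hMcyc, hMind⟩ := (mem_filter.1 hM).2
  refine ⟨M, hMcyc, hMind, fun c hc => ?_⟩
  by_contra hspan
  have hnot : ¬InSpan ↑M c := fun ⟨D, hD, hDc⟩ => hspan ⟨D, coe_subset.1 hD, hDc⟩
  have hcM : c ∉ M := fun h => hnot (inSpan_of_mem h)
  have hcyc : ∀ x ∈ insert c M, IsCycle G x := fun x hx => (mem_insert.1 hx).elim (· ▸ hc) (hMcyc x)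
  have := hmax (insert c M) (mem_filter.2 ⟨mem_univ _, hcyc, hMind.insert hnot⟩)
  rw [card_insert_of_notMem hcM] at this
  omega

theorem exists_isMCB (G : SimpleGraph V) : ∃ M, IsMCB G M := by
  classical
  obtain ⟨M₀, hM₀⟩ := exists_isCycleBasis G
  obtain ⟨M, hM, hmin⟩ := (univ.filter (IsCycleBasis G)).exists_min_image weight
    ⟨M₀, mem_filter.2 ⟨mem_univ _, hM₀⟩⟩
  exact ⟨M, (mem_filter.1 hM).2, fun B' hB' => hmin B' (mem_filter.2 ⟨mem_univ _, hB'⟩)⟩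

theorem IsMCB.exists_card_inter_lt {G : SimpleGraph V} {M B : Finset (Finset (Sym2 V))}
    {t : Finset (Sym2 V)} (hM : IsMCB G M) (hind : LinIndep B) (htB : t ∈ B) (htM : t ∉ M)
    (htcyc : IsCycle G t) (htcard : #t ≤ 3) : ∃ M', IsMCB G M' ∧ #(B ∩ M) < #(B ∩ M') := by
  obtain ⟨hMcyc, hMind, hMspan⟩ := hM.1
  obtain ⟨D, hDM, hDt⟩ := hMspan t htcyc
  -- otherwise `D` and `{t}` would be two different representations of `t` inside `B`
  obtain ⟨c, hcD, hcB⟩ : ∃ c ∈ D, c ∉ B := by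
    by_contra! hDB
    have : D = {t} := hind.eq_of_cycleSum_eq hDB (singleton_subset_iff.2 htB) (by simpa)
    exact htM (hDM (this ▸ mem_singleton_self t))
  have hle : #t ≤ #c :=
    htcard.trans ((hMcyc c (hDM hcD)).three_le_card (hMind.nonempty_of_mem (hDM hcD)))
  refine ⟨insert t (M.erase c), hDt ▸ hM.exchange hDM hcD (hDt ▸ htcyc) (hDt ▸ hle), ?_⟩
  have hgrow : insert t (B ∩ M) ⊆ B ∩ insert t (M.erase c) := by
    refine insert_subset (mem_inter.2 ⟨htB, mem_insert_self _ _⟩) fun x hx => ?_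
    obtain ⟨hxB, hxM⟩ := mem_inter.1 hx
    exact mem_inter.2 ⟨hxB, mem_insert_of_mem (mem_erase.2 ⟨ne_of_mem_of_not_mem hxB hcB, hxM⟩)⟩
  calc #(B ∩ M) < #(insert t (B ∩ M)) :=
        card_lt_card (ssubset_insert fun h => htM (mem_inter.1 h).2)
    _ ≤ #(B ∩ insert t (M.erase c)) := card_le_card hgrow

/-- Every linearly independent set of triangles of `G` extends to a
minimum cycle basis of `G`. -/
theorem indep_triangles_extend_to_mcb (G : SimpleGraph V) (B : Finset (Finset (Sym2 V)))
    (hB : ∀ c ∈ B, IsCycle G c ∧ c.card = 3) (hind : LinIndep B) :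
    ∃ B' : Finset (Finset (Sym2 V)), IsMCB G B' ∧ B ⊆ B' := by
  classical
  obtain ⟨M₀, hM₀⟩ := exists_isMCB G
  obtain ⟨M, hM, hmax⟩ := (univ.filter (IsMCB G)).exists_max_image (fun M => #(B ∩ M))
    ⟨M₀, mem_filter.2 ⟨mem_univ _, hM₀⟩⟩
  replace hM := (mem_filter.1 hM).2
  refine ⟨M, hM, fun t htB => ?_⟩
  by_contra htM
  obtain ⟨M', hM', hlt⟩ :=
    hM.exists_card_inter_lt hind htB htM (hB t htB).1 (hB t htB).2.le
  exact (hmax M' (mem_filter.2 ⟨mem_univ _, hM'⟩)).not_gt hlt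

end MCBI
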